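/- Let x ∈ ℝ^d with x ≠ 0, y ∈ ℝ, and C > 0. Define ℓ : ℝ → ℝ by ℓ(z) := ∫₀^z s · min(1, C/(‖x‖·|s|)) ds (with the integrand equal to 0 at s = 0), and for θ ∈ ℝ^d define g(θ) := x · (⟨x, θ⟩ − y) · min(1, C/‖x (⟨x,θ⟩ − y)‖) when ⟨x,θ⟩ ≠ y and g(θ) := 0 otherwise. Then: (i) for every θ ∈ ℝ^d, the map θ ↦ ℓ(⟨x, θ⟩ − y) is differentiable at θ with gradient g(θ), i.e. the clipped gradient of the square loss is the exact gradient of ℓ composed with the residual; (ii) for all θ, θ' ∈ ℝ^d, ‖g(θ) − g(θ')‖ ≤ ‖x‖² ‖θ − θ'‖; and (iii) for all θ ∈ ℝ^d, ‖g(θ)‖ ≤ C. -/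

import Mathlib

open Real
open scoped RealInnerProductSpace

noncomputable def ell (nx C z : ℝ) : ℝ := ∫ s in (0:ℝ)..z, s * min 1 (C / (nx * |s|))

noncomputable def clipGrad {d : ℕ} (x : EuclideanSpace ℝ (Fin d)) (y C : ℝ)
    (θ : EuclideanSpace ℝ (Fin d)) : EuclideanSpace ℝ (Fin d) :=
  if ⟪x, θ⟫ = y then 0
  else ((⟪x, θ⟫ - y) * min 1 (C / ‖(⟪x, θ⟫ - y) • x‖)) • x

lemma phi_eq_clamp {nx C : ℝ} (hnx : 0 < nx) (hC : 0 < C) (z : ℝ) :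
    z * min 1 (C / (nx * |z|)) = max (-(C/nx)) (min (C/nx) z) := by
  set b := C / nx with hb
  have hbpos : 0 < b := div_pos hC hnx
  rcases eq_or_ne z 0 with rfl | hz0
  · rw [min_eq_right hbpos.le, max_eq_right (neg_nonpos.mpr hbpos.le), zero_mul]
  · have habs : 0 < nx * |z| := mul_pos hnx (abs_pos.mpr hz0)
    rcases le_or_gt (nx * |z|) C with h | h
    · have h1 : (1:ℝ) ≤ C / (nx * |z|) := (one_le_div habs).mpr h
      have hzb : |z| ≤ b := (le_div_iff₀ hnx).mpr (by nlinarith)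
      obtain ⟨h2, h3⟩ := abs_le.mp hzb
      rw [min_eq_left h1, mul_one, min_eq_right h3, max_eq_right h2]
    · have h1 : C / (nx * |z|) ≤ 1 := (div_le_one habs).mpr h.le
      have hzb : b < |z| := (div_lt_iff₀ hnx).mpr (by nlinarith)
      rw [min_eq_right h1]
      rcases hz0.lt_or_gt with hneg | hpos
      · have ha : |z| = -z := abs_of_neg hneg
        have he : z * (C / (nx * -z)) = -(C/nx) := by
          have hz' : (-z) ≠ 0 := by intro h'; apply hz0; linarith
          field_simp
        rw [ha, he, min_eq_right (hneg.le.trans hbpos.le),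
          max_eq_left (by rw [ha] at hzb; linarith)]
      · have ha : |z| = z := abs_of_pos hpos
        have he : z * (C / (nx * z)) = C/nx := by
          field_simp
        rw [ha, he, min_eq_left (by rw [ha] at hzb; linarith),
          max_eq_right (by linarith)]

lemma clamp_lip (b z w : ℝ) :
    |max (-b) (min b z) - max (-b) (min b w)| ≤ |z - w| := by
  calc |max (-b) (min b z) - max (-b) (min b w)|
      ≤ max |(-b) - (-b)| |min b z - min b w| := abs_max_sub_max_le_max _ _ _ _
    _ = |min b z - min b w| := by simp
    _ ≤ max |b - b| |z - w| := abs_min_sub_min_le_max _ _ _ _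
    _ = |z - w| := by simp

lemma clamp_abs_le {b : ℝ} (hb : 0 ≤ b) (z : ℝ) : |max (-b) (min b z)| ≤ b :=
  abs_le.mpr ⟨le_max_left _ _, max_le (by linarith) (min_le_left _ _)⟩

lemma clipGrad_eq {d : ℕ} (x : EuclideanSpace ℝ (Fin d)) (y C : ℝ)
    (θ : EuclideanSpace ℝ (Fin d)) :
    clipGrad x y C θ
      = ((⟪x, θ⟫ - y) * min 1 (C / (‖x‖ * |⟪x, θ⟫ - y|))) • x := by
  unfold clipGrad
  split_ifs with h
  · rw [h, sub_self, zero_mul, zero_smul]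
  · rw [norm_smul, Real.norm_eq_abs, mul_comm ‖x‖ |⟪x, θ⟫ - y|]

/-- The clipped gradient of the square loss is the exact gradient of the surrogate loss
`θ ↦ ℓ(⟨x,θ⟩ − y)`; moreover it is `‖x‖²`-Lipschitz and bounded by `C`. -/
theorem clipped_gradient_properties {d : ℕ} (x : EuclideanSpace ℝ (Fin d)) (hx : x ≠ 0)
    (y C : ℝ) (hC : 0 < C) :
    (∀ θ : EuclideanSpace ℝ (Fin d),
      HasGradientAt (fun θ' => ell ‖x‖ C (⟪x, θ'⟫ - y)) (clipGrad x y C θ) θ) ∧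
    (∀ θ θ' : EuclideanSpace ℝ (Fin d),
      ‖clipGrad x y C θ - clipGrad x y C θ'‖ ≤ ‖x‖ ^ 2 * ‖θ - θ'‖) ∧
    (∀ θ : EuclideanSpace ℝ (Fin d), ‖clipGrad x y C θ‖ ≤ C) := by
  have hnx : 0 < ‖x‖ := norm_pos_iff.mpr hx
  set b := C / ‖x‖ with hb
  have hbpos : 0 < b := div_pos hC hnx
  -- φ in clamp form
  have hg : ∀ θ : EuclideanSpace ℝ (Fin d),
      clipGrad x y C θ = (max (-b) (min b (⟪x, θ⟫ - y))) • x := by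
    intro θ
    rw [clipGrad_eq, phi_eq_clamp hnx hC]
  refine ⟨?_, ?_, ?_⟩
  · intro θ
    set r := ⟪x, θ⟫ - y with hr
    have hcont : Continuous fun s : ℝ => s * min 1 (C / (‖x‖ * |s|)) := by
      have : (fun s : ℝ => s * min 1 (C / (‖x‖ * |s|)))
          = fun s => max (-b) (min b s) := funext fun s => phi_eq_clamp hnx hC s
      rw [this]
      exact continuous_const.max (continuous_const.min continuous_id)
    have hd : HasDerivAt (fun z => ell ‖x‖ C z) (r * min 1 (C / (‖x‖ * |r|))) r :=
      (hcont.integral_hasStrictDerivAt 0 r).hasDerivAt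
    have hin : HasFDerivAt (fun θ' : EuclideanSpace ℝ (Fin d) => ⟪x, θ'⟫ - y)
        (innerSL ℝ x) θ := ((innerSL ℝ x).hasFDerivAt).sub_const y
    have hcomp := hd.comp_hasFDerivAt θ hin
    rw [hasGradientAt_iff_hasFDerivAt]
    convert hcomp using 1
    · rfl
    · rfl
    rw [clipGrad_eq, phi_eq_clamp hnx hC, ← phi_eq_clamp hnx hC]
    ext v
    simp [InnerProductSpace.toDual_apply_apply, real_inner_smul_left]
  · intro θ θ'
    rw [hg θ, hg θ', ← sub_smul, norm_smul, Real.norm_eq_abs]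
    have h1 := clamp_lip b (⟪x, θ⟫ - y) (⟪x, θ'⟫ - y)
    have h2 : (⟪x, θ⟫ - y) - (⟪x, θ'⟫ - y) = ⟪x, θ - θ'⟫ := by
      rw [inner_sub_right]; ring
    rw [h2] at h1
    have h3 : |⟪x, θ - θ'⟫| ≤ ‖x‖ * ‖θ - θ'‖ := abs_real_inner_le_norm x (θ - θ')
    calc |max (-b) (min b (⟪x, θ⟫ - y)) - max (-b) (min b (⟪x, θ'⟫ - y))| * ‖x‖
        ≤ (‖x‖ * ‖θ - θ'‖) * ‖x‖ := by
          exact mul_le_mul_of_nonneg_right (h1.trans h3) (norm_nonneg x)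
      _ = ‖x‖ ^ 2 * ‖θ - θ'‖ := by ring
  · intro θ
    rw [hg θ, norm_smul, Real.norm_eq_abs]
    calc |max (-b) (min b (⟪x, θ⟫ - y))| * ‖x‖
        ≤ b * ‖x‖ := mul_le_mul_of_nonneg_right (clamp_abs_le hbpos.le _) (norm_nonneg x)
      _ = C := div_mul_cancel₀ C hnx.ne'
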